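/- arXiv:1112.2396 — 3 statements merged into one kernel-verified Lean document; each statement's English description precedes it below -/
import Mathlib

section
/- Suppose St, lookup functions l_i : St → Val_i, and update functions u_i : Val_i → St → St are such that the combined lookup map ⟨l_i⟩ : St → ∏ i, Val i is bijective. Then equations (1) [(1.1) l i (u i a s) = a and (1.2) l j (u i a s) = l j s for j ≠ i] hold if and only if all of the following hold: (2.1) u i (l i s) s = s, (2.3) u i a' (u i a s) = u i a' s, (2.4) l i (u i a s) = a, (2.6) u j b (u i a s) = u i a (u j b s) for i ≠ j, and (2.7) l j (u i a s) = l j s for i ≠ j. -/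
theorem stmt6 {Loc : Type} {Val : Loc → Type} {St : Type}
    (l : (i : Loc) → St → Val i) (u : (i : Loc) → Val i → St → St)
    (hbij : Function.Bijective (fun (s : St) => (fun i => l i s : (i : Loc) → Val i))) :
    ((∀ (i : Loc) (a : Val i) (s : St), l i (u i a s) = a) ∧
     (∀ (i j : Loc), j ≠ i → ∀ (a : Val i) (s : St), l j (u i a s) = l j s))
    ↔
    ((∀ (i : Loc) (s : St), u i (l i s) s = s) ∧
     (∀ (i : Loc) (a a' : Val i) (s : St), u i a' (u i a s) = u i a' s) ∧
     (∀ (i : Loc) (a : Val i) (s : St), l i (u i a s) = a) ∧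
     (∀ (i j : Loc), i ≠ j → ∀ (a : Val i) (b : Val j) (s : St),
       u j b (u i a s) = u i a (u j b s)) ∧
     (∀ (i j : Loc), i ≠ j → ∀ (a : Val i) (s : St), l j (u i a s) = l j s)) := by
  have hinj : ∀ s t : St, (∀ j, l j s = l j t) → s = t := by
    intro s t h
    exact hbij.1 (funext h)
  constructor
  · rintro ⟨h1, h2⟩
    refine ⟨?_, ?_, h1, ?_, fun i j hij a s => h2 i j (Ne.symm hij) a s⟩
    · intro i s
      apply hinj
      intro j
      by_cases hj : j = i
      · subst hj; exact h1 j (l j s) s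
      · exact h2 i j hj (l i s) s
    · intro i a a' s
      apply hinj
      intro j
      by_cases hj : j = i
      · subst hj; rw [h1, h1]
      · rw [h2 i j hj, h2 i j hj, h2 i j hj]
    · intro i j hij a b s
      apply hinj
      intro k
      by_cases hk : k = i
      · subst hk
        rw [h2 j k hij, h1, h1]
      · by_cases hk2 : k = j
        · subst hk2
          rw [h1, h2 i k hk, h1]
        · rw [h2 j k hk2, h2 i k hk, h2 i k hk, h2 j k hk2]
  · rintro ⟨_, _, h1, _, h2⟩
    exact ⟨h1, fun i j hij => h2 i j (Ne.symm hij)⟩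
end

section
/- Weak equations between modifiers satisfy substitution but only pure replacement: (a) if g₁ ∼ g₂ : Y → Z (weakly equal as modifiers) and f : X → Y is any modifier, then g₁ ∘ f ∼ g₂ ∘ f; (b) if f₁ ∼ f₂ : X → Y and g : Y → Z is a pure modifier (of the form Prod.map g₀ id), then g ∘ f₁ ∼ g ∘ f₂. Moreover, (c) pure replacement can fail for general modifiers: there exist a state set S, types, weakly equal modifiers f₁ ∼ f₂ and a modifier g with g ∘ f₁ not weakly equal to g ∘ f₂. -/
theorem stmt11 :
    (∀ (S X Y Z : Type) (g₁ g₂ : Y × S → Z × S) (f : X × S → Y × S),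
      Prod.fst ∘ g₁ = Prod.fst ∘ g₂ → Prod.fst ∘ (g₁ ∘ f) = Prod.fst ∘ (g₂ ∘ f)) ∧
    (∀ (S X Y Z : Type) (f₁ f₂ : X × S → Y × S) (g₀ : Y → Z),
      Prod.fst ∘ f₁ = Prod.fst ∘ f₂ →
      Prod.fst ∘ ((Prod.map g₀ id : Y × S → Z × S) ∘ f₁) =
        Prod.fst ∘ ((Prod.map g₀ id : Y × S → Z × S) ∘ f₂)) ∧
    (∃ (S X Y Z : Type) (f₁ f₂ : X × S → Y × S) (g : Y × S → Z × S),
      Prod.fst ∘ f₁ = Prod.fst ∘ f₂ ∧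
      Prod.fst ∘ (g ∘ f₁) ≠ Prod.fst ∘ (g ∘ f₂)) := by
  refine ⟨?_, ?_, ?_⟩
  · intro S X Y Z g₁ g₂ f h
    funext p
    exact congrFun h (f p)
  · intro S X Y Z f₁ f₂ g₀ h
    funext p
    simp only [Function.comp_apply, Prod.map_fst]
    exact congrArg g₀ (congrFun h p)
  · refine ⟨Bool, Bool, Bool, Bool, fun p => (p.1, p.2), fun p => (p.1, !p.2),
      fun p => (p.2, p.2), rfl, ?_⟩
    intro h
    have := congrFun h (true, true)
    simp at this
end

section
/- In the side-effect semantics, the left semi-pure product is characterized uniquely: given a modifier f : X₂ × S → Y₂ × S, the modifier id_X ⋉ f : (X × X₂) × S → (X × Y₂) × S defined by ((x, x₂), s) ↦ ((x, (f (x₂, s)).1), (f (x₂, s)).2) satisfies π₁ ∘ (id ⋉ f) ∼ π₁ (weakly: first components agree) and π₂ ∘ (id ⋉ f) ≡ f ∘ π₂ (strongly, where π₂ as a modifier maps ((x,x₂),s) to (x₂,s)); moreover any modifier g : (X × X₂) × S → (X × Y₂) × S satisfying these two conditions equals id ⋉ f. -/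
def lsp {S X X₂ Y₂ : Type} (f : X₂ × S → Y₂ × S) :
    (X × X₂) × S → (X × Y₂) × S :=
  fun p => ((p.1.1, (f (p.1.2, p.2)).1), (f (p.1.2, p.2)).2)

theorem stmt19 {S X X₂ Y₂ : Type} (f : X₂ × S → Y₂ × S) :
    (Prod.fst ∘ (Prod.map Prod.fst (id : S → S) : (X × Y₂) × S → X × S) ∘
        (lsp f : (X × X₂) × S → (X × Y₂) × S) =
      Prod.fst ∘ (Prod.map Prod.fst (id : S → S) : (X × X₂) × S → X × S)) ∧
    ((Prod.map Prod.snd (id : S → S) : (X × Y₂) × S → Y₂ × S) ∘ lsp f =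
      f ∘ (Prod.map Prod.snd (id : S → S) : (X × X₂) × S → X₂ × S)) ∧
    (∀ g : (X × X₂) × S → (X × Y₂) × S,
      (Prod.fst ∘ (Prod.map Prod.fst (id : S → S) : (X × Y₂) × S → X × S) ∘ g =
        Prod.fst ∘ (Prod.map Prod.fst (id : S → S) : (X × X₂) × S → X × S)) →
      ((Prod.map Prod.snd (id : S → S) : (X × Y₂) × S → Y₂ × S) ∘ g =
        f ∘ (Prod.map Prod.snd (id : S → S) : (X × X₂) × S → X₂ × S)) →
      g = lsp f) := by
  refine ⟨rfl, rfl, fun g h1 h2 => ?_⟩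
  funext p
  have e1 := congrFun h1 p
  have e2 := congrFun h2 p
  simp [Prod.map, lsp, Prod.ext_iff] at e1 e2 ⊢
  exact ⟨⟨e1, e2.1⟩, e2.2⟩
end
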